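/- arXiv:2402.11867 — 3 statements merged into one kernel-verified Lean document; each statement's English description precedes it below -/
import Mathlib

section
/- Let r > 0 and let δ ∈ ℝ^{m×n} be a matrix with rank(δ) ≤ r. Then the nuclear norm of δ equals one half of the minimum of ‖u‖_F² + ‖v‖_F² over all factorizations δ = uvᵀ with u ∈ ℝ^{m×r} and v ∈ ℝ^{n×r}; i.e., ‖δ‖_* = (1/2) min{‖u‖_F² + ‖v‖_F² : u ∈ ℝ^{m×r}, v ∈ ℝ^{n×r}, uvᵀ = δ}, and this minimum is attained. -/
open MeasureTheory Matrix

/-- Frobenius norm of a real matrix. -/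
noncomputable def frobNorm {m n : ℕ} (A : Matrix (Fin m) (Fin n) ℝ) : ℝ :=
  Real.sqrt (∑ i, ∑ j, (A i j) ^ 2)

/-- Nuclear norm of a real matrix: the sum of its singular values, i.e. the sum of the
square roots of the eigenvalues of `Aᵀ * A`. -/
noncomputable def nuclearNorm {m n : ℕ} (A : Matrix (Fin m) (Fin n) ℝ) : ℝ :=
  ∑ i, Real.sqrt ((show (Aᵀ * A).IsHermitian by
    simpa [Matrix.conjTranspose_eq_transpose_of_trivial] using
      Matrix.isHermitian_conjTranspose_mul_self A).eigenvalues i)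

/-- Matrix inner product `⟨A, B⟩ = tr(Aᵀ B)`. -/
noncomputable def mInner {m n : ℕ} (A B : Matrix (Fin m) (Fin n) ℝ) : ℝ :=
  Matrix.trace (Aᵀ * B)

/-!
Write `A = Q Vᵀ` with `V` an orthogonal eigenbasis of `AᵀA` and `Q = AV`, whose columns are
orthogonal with norms the singular values `σⱼ`. The balanced factors `u = Q Σ^{-1/2}`,
`v = V Σ^{1/2}` give `‖u‖_F² = ‖v‖_F² = ∑ σⱼ`; since only `rank A ≤ r` of their columns are
nonzero, they can be squeezed into `r` columns. Conversely, the partial isometry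
`Y = Q Σ⁻¹ Vᵀ` satisfies `YᵀY ≤ 1` and `⟨Y, A⟩ = ∑ σⱼ`, so for any `A = u vᵀ`,
`∑ σⱼ = ⟨u, Y v⟩ ≤ ‖u‖_F ‖Y v‖_F ≤ ‖u‖_F ‖v‖_F ≤ (‖u‖_F² + ‖v‖_F²) / 2`.
-/

section Frobenius

variable {m n r : ℕ}

lemma frobNorm_eq_sqrt_sum_prod (A : Matrix (Fin m) (Fin n) ℝ) :
    frobNorm A = √(∑ p : Fin m × Fin n, A p.1 p.2 ^ 2) := by
  rw [frobNorm, Fintype.sum_prod_type]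

lemma frobNorm_nonneg (A : Matrix (Fin m) (Fin n) ℝ) : 0 ≤ frobNorm A := Real.sqrt_nonneg _

lemma frobNorm_sq (A : Matrix (Fin m) (Fin n) ℝ) : frobNorm A ^ 2 = mInner A A := by
  rw [frobNorm, Real.sq_sqrt (by positivity), mInner, trace, Finset.sum_comm]
  simp [mul_apply, sq]

lemma mInner_le_frobNorm_mul (A B : Matrix (Fin m) (Fin n) ℝ) :
    mInner A B ≤ frobNorm A * frobNorm B := by
  rw [frobNorm_eq_sqrt_sum_prod, frobNorm_eq_sqrt_sum_prod]
  convert Real.sum_mul_le_sqrt_mul_sqrt Finset.univ (fun p : Fin m × Fin n => A p.1 p.2)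
    (fun p => B p.1 p.2) using 1
  rw [mInner, trace, Fintype.sum_prod_type_right]
  simp [mul_apply]

lemma mInner_mul_transpose (Y : Matrix (Fin m) (Fin n) ℝ) (u : Matrix (Fin m) (Fin r) ℝ)
    (v : Matrix (Fin n) (Fin r) ℝ) : mInner Y (u * vᵀ) = mInner u (Y * v) := by
  rw [mInner, mInner, ← trace_transpose, transpose_mul, transpose_mul, transpose_transpose,
    transpose_transpose, trace_mul_comm, trace_mul_comm uᵀ, Matrix.mul_assoc]

lemma frobNorm_mul_le_of_posSemidef {Y : Matrix (Fin m) (Fin n) ℝ}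
    (hY : (1 - Yᵀ * Y).PosSemidef) (v : Matrix (Fin n) (Fin r) ℝ) :
    frobNorm (Y * v) ≤ frobNorm v := by
  have h := (hY.conjTranspose_mul_mul_same v).trace_nonneg
  rw [conjTranspose_eq_transpose_of_trivial, Matrix.mul_sub, Matrix.sub_mul, trace_sub,
    sub_nonneg, Matrix.mul_one] at h
  refine (pow_le_pow_iff_left₀ (frobNorm_nonneg _) (frobNorm_nonneg _) two_ne_zero).mp ?_
  simpa [frobNorm_sq, mInner, transpose_mul, Matrix.mul_assoc] using h

lemma frobNorm_sq_mul (B : Matrix (Fin m) (Fin n) ℝ) (E : Matrix (Fin n) (Fin r) ℝ) :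
    frobNorm (B * E) ^ 2 = trace (Bᵀ * B * (E * Eᵀ)) := by
  rw [frobNorm_sq, mInner, transpose_mul, Matrix.mul_assoc, trace_mul_comm Eᵀ]
  simp only [Matrix.mul_assoc]

lemma mInner_mul_transpose_le {Y : Matrix (Fin m) (Fin n) ℝ} (hY : (1 - Yᵀ * Y).PosSemidef)
    (u : Matrix (Fin m) (Fin r) ℝ) (v : Matrix (Fin n) (Fin r) ℝ) :
    mInner Y (u * vᵀ) ≤ frobNorm u * frobNorm v :=
  calc mInner Y (u * vᵀ) = mInner u (Y * v) := mInner_mul_transpose Y u v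
    _ ≤ frobNorm u * frobNorm (Y * v) := mInner_le_frobNorm_mul u (Y * v)
    _ ≤ frobNorm u * frobNorm v :=
      mul_le_mul_of_nonneg_left (frobNorm_mul_le_of_posSemidef hY v) (frobNorm_nonneg u)

end Frobenius

lemma transpose_mul_mul_diagonal {R m n : Type*} [CommSemiring R] [Fintype m] [Fintype n]
    [DecidableEq n] (Q : Matrix m n R) (d : n → R) :
    (Q * diagonal d)ᵀ * (Q * diagonal d) = diagonal d * (Qᵀ * Q) * diagonal d := by
  simp only [transpose_mul, diagonal_transpose, Matrix.mul_assoc]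

lemma exists_mul_transpose_eq_diagonal_ite {R ι κ : Type*} [Semiring R] [Fintype ι]
    [DecidableEq ι] [Fintype κ] [DecidableEq κ] (p : ι → Prop) [DecidablePred p]
    (h : Fintype.card {j // p j} ≤ Fintype.card κ) :
    ∃ E : Matrix ι κ R, E * Eᵀ = diagonal fun j => if p j then 1 else 0 := by
  obtain ⟨f⟩ := Function.Embedding.nonempty_of_card_le h
  refine ⟨of fun j c => if h : p j then (if f ⟨j, h⟩ = c then 1 else 0) else 0, ?_⟩
  ext j j'
  by_cases hj : p j <;> by_cases hj' : p j' <;>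
    simp [mul_apply, diagonal_apply, hj, hj', f.injective.eq_iff, Subtype.ext_iff]
  exact fun hjj' => (hj' (hjj' ▸ hj)).elim

lemma isHermitian_transpose_mul_self {m n : Type*} [Fintype m] (A : Matrix m n ℝ) :
    (Aᵀ * A).IsHermitian := by
  simpa [conjTranspose_eq_transpose_of_trivial] using isHermitian_conjTranspose_mul_self A

section SingularValues

variable {m n : Type*} [Fintype m] [Fintype n] [DecidableEq n] (A : Matrix m n ℝ)

noncomputable def rightSingularVectors : Matrix n n ℝ :=
  (isHermitian_transpose_mul_self A).eigenvectorUnitary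

noncomputable def singularValues (j : n) : ℝ :=
  √((isHermitian_transpose_mul_self A).eigenvalues j)

lemma rightSingularVectors_mul_transpose :
    rightSingularVectors A * (rightSingularVectors A)ᵀ = 1 := by
  rw [rightSingularVectors]
  simpa [star_eq_conjTranspose, conjTranspose_eq_transpose_of_trivial] using
    mem_unitaryGroup_iff.mp (isHermitian_transpose_mul_self A).eigenvectorUnitary.2

lemma transpose_mul_rightSingularVectors :
    (rightSingularVectors A)ᵀ * rightSingularVectors A = 1 := by
  rw [rightSingularVectors]
  simpa [star_eq_conjTranspose, conjTranspose_eq_transpose_of_trivial] using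
    mem_unitaryGroup_iff'.mp (isHermitian_transpose_mul_self A).eigenvectorUnitary.2

lemma singularValues_nonneg (j : n) : 0 ≤ singularValues A j := Real.sqrt_nonneg _

lemma singularValues_sq (j : n) :
    singularValues A j ^ 2 = (isHermitian_transpose_mul_self A).eigenvalues j :=
  Real.sq_sqrt <| by
    simpa [conjTranspose_eq_transpose_of_trivial] using
      (posSemidef_conjTranspose_mul_self A).eigenvalues_nonneg j

lemma gram_mul_rightSingularVectors :
    (A * rightSingularVectors A)ᵀ * (A * rightSingularVectors A) =
      diagonal fun j => singularValues A j ^ 2 := by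
  have := (isHermitian_transpose_mul_self A).conjStarAlgAut_star_eigenvectorUnitary
  simp only [Unitary.conjStarAlgAut_star_apply, star_eq_conjTranspose,
    conjTranspose_eq_transpose_of_trivial] at this
  simp only [transpose_mul, Matrix.mul_assoc, singularValues_sq] at this ⊢
  exact this

lemma card_singularValues_ne_zero :
    Fintype.card {j // singularValues A j ≠ 0} = A.rank := by
  rw [← rank_transpose_mul_self, (isHermitian_transpose_mul_self A).rank_eq_card_non_zero_eigs]
  exact Fintype.card_congr <| Equiv.subtypeEquivRight fun j => by
    rw [← singularValues_sq, pow_ne_zero_iff two_ne_zero]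

lemma mul_rightSingularVectors_apply_eq_zero {i : m} {j : n} (hj : singularValues A j = 0) :
    (A * rightSingularVectors A) i j = 0 := by
  have hcol := congrFun (congrFun (gram_mul_rightSingularVectors A) j) j
  rw [mul_apply] at hcol
  simp only [transpose_apply, diagonal_apply_eq, hj] at hcol
  have := (Finset.sum_eq_zero_iff_of_nonneg fun k _ => mul_self_nonneg
    ((A * rightSingularVectors A) k j)).mp (by simpa using hcol) i (Finset.mem_univ i)
  exact mul_self_eq_zero.mp this

lemma mul_rightSingularVectors_mul_diagonal_ite :
    A * rightSingularVectors A * diagonal (fun j => if singularValues A j ≠ 0 then (1 : ℝ) else 0) =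
      A * rightSingularVectors A := by
  ext i j
  by_cases hj : singularValues A j = 0
  · simp [mul_diagonal, hj, mul_rightSingularVectors_apply_eq_zero A hj]
  · simp [mul_diagonal, hj]

lemma mul_rightSingularVectors_mul_transpose :
    A * rightSingularVectors A * (rightSingularVectors A)ᵀ = A := by
  rw [Matrix.mul_assoc, rightSingularVectors_mul_transpose, Matrix.mul_one]

noncomputable def balancedLeftFactor : Matrix m n ℝ :=
  A * rightSingularVectors A * diagonal fun j => (√(singularValues A j))⁻¹

noncomputable def balancedRightFactor : Matrix n n ℝ :=
  rightSingularVectors A * diagonal fun j => √(singularValues A j)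

lemma balancedLeftFactor_mul_diagonal_ite_mul_transpose :
    balancedLeftFactor A * diagonal (fun j => if singularValues A j ≠ 0 then (1 : ℝ) else 0) *
      (balancedRightFactor A)ᵀ = A := by
  set V := rightSingularVectors A
  set σ := singularValues A
  set p : n → ℝ := fun j => if σ j ≠ 0 then 1 else 0
  calc _ = A * V * (diagonal (fun j => (√(σ j))⁻¹) * diagonal p * diagonal (fun j => √(σ j))) *
        Vᵀ := by
        simp only [balancedLeftFactor, balancedRightFactor, transpose_mul, diagonal_transpose,
          Matrix.mul_assoc]
        rfl
    _ = A * V * diagonal p * Vᵀ := by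
        rw [diagonal_mul_diagonal, diagonal_mul_diagonal]
        congr; funext j
        by_cases hj : σ j = 0
        · simp [p, hj]
        · have : √(σ j) ≠ 0 := Real.sqrt_ne_zero'.mpr ((singularValues_nonneg A j).lt_of_ne' hj)
          simp [p, hj, this]
    _ = A := by
        rw [mul_rightSingularVectors_mul_diagonal_ite, mul_rightSingularVectors_mul_transpose]

lemma transpose_mul_balancedLeftFactor :
    (balancedLeftFactor A)ᵀ * balancedLeftFactor A = diagonal (singularValues A) := by
  rw [balancedLeftFactor, transpose_mul_mul_diagonal, gram_mul_rightSingularVectors,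
    diagonal_mul_diagonal, diagonal_mul_diagonal]
  congr; funext j
  have hσ := singularValues_nonneg A j
  by_cases hj : singularValues A j = 0
  · simp [hj]
  · have : √(singularValues A j) ≠ 0 := Real.sqrt_ne_zero'.mpr (hσ.lt_of_ne' hj)
    field_simp
    rw [Real.sq_sqrt hσ]

lemma transpose_mul_balancedRightFactor :
    (balancedRightFactor A)ᵀ * balancedRightFactor A = diagonal (singularValues A) := by
  rw [balancedRightFactor, transpose_mul_mul_diagonal, transpose_mul_rightSingularVectors,
    Matrix.mul_one, diagonal_mul_diagonal]
  congr; funext j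
  exact Real.mul_self_sqrt (singularValues_nonneg A j)

/-- Since `(σ j)⁻¹ = 0` when `σ j = 0`, this is `A V Σ⁺ Vᵀ`, the partial isometry in the polar
decomposition of `A`. -/
noncomputable def polarFactor : Matrix m n ℝ :=
  A * rightSingularVectors A * diagonal (fun j => (singularValues A j)⁻¹) *
    (rightSingularVectors A)ᵀ

lemma posSemidef_one_sub_transpose_mul_polarFactor :
    (1 - (polarFactor A)ᵀ * polarFactor A).PosSemidef := by
  set V := rightSingularVectors A
  set σ := singularValues A
  set W := A * V * diagonal fun j => (σ j)⁻¹
  have hWW : Wᵀ * W = diagonal fun j => (σ j)⁻¹ * σ j ^ 2 * (σ j)⁻¹ := by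
    rw [transpose_mul_mul_diagonal, gram_mul_rightSingularVectors, diagonal_mul_diagonal,
      diagonal_mul_diagonal]
  have hY : 1 - (W * Vᵀ)ᵀ * (W * Vᵀ) =
      V * diagonal (fun j => 1 - (σ j)⁻¹ * σ j ^ 2 * (σ j)⁻¹) * Vᵀ := by
    rw [← diagonal_one, ← diagonal_sub, diagonal_one, ← hWW, Matrix.mul_sub, Matrix.sub_mul,
      Matrix.mul_one, rightSingularVectors_mul_transpose, transpose_mul, transpose_transpose]
    simp only [Matrix.mul_assoc]
  have hnonneg : ∀ j, 0 ≤ 1 - (σ j)⁻¹ * σ j ^ 2 * (σ j)⁻¹ := fun j => by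
    by_cases hj : σ j = 0
    · simp [hj]
    · field_simp; norm_num
  rw [polarFactor, hY]
  simpa [conjTranspose_eq_transpose_of_trivial] using
    (PosSemidef.diagonal hnonneg).mul_mul_conjTranspose_same V

end SingularValues

section NuclearNorm

variable {m n r : ℕ}

lemma nuclearNorm_eq_sum_singularValues (A : Matrix (Fin m) (Fin n) ℝ) :
    nuclearNorm A = ∑ j, singularValues A j := rfl

lemma mInner_polarFactor_self (A : Matrix (Fin m) (Fin n) ℝ) :
    mInner (polarFactor A) A = nuclearNorm A := by
  rw [mInner, polarFactor, transpose_mul, transpose_mul, transpose_transpose, diagonal_transpose,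
    Matrix.mul_assoc, trace_mul_comm (rightSingularVectors A)]
  simp only [Matrix.mul_assoc]
  rw [gram_mul_rightSingularVectors, diagonal_mul_diagonal, trace_diagonal,
    nuclearNorm_eq_sum_singularValues]
  refine Finset.sum_congr rfl fun j _ => ?_
  by_cases hj : singularValues A j = 0
  · simp [hj]
  · field_simp

theorem exists_mul_transpose_eq_frobNorm_sq_eq_nuclearNorm (A : Matrix (Fin m) (Fin n) ℝ)
    (hrank : A.rank ≤ r) :
    ∃ (u : Matrix (Fin m) (Fin r) ℝ) (v : Matrix (Fin n) (Fin r) ℝ),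
      u * vᵀ = A ∧ frobNorm u ^ 2 = nuclearNorm A ∧ frobNorm v ^ 2 = nuclearNorm A := by
  obtain ⟨E, hE⟩ : ∃ E : Matrix (Fin n) (Fin r) ℝ,
      E * Eᵀ = diagonal fun j => if singularValues A j ≠ 0 then 1 else 0 :=
    exists_mul_transpose_eq_diagonal_ite _ <| by
      rw [card_singularValues_ne_zero, Fintype.card_fin]; exact hrank
  have hnorm : trace (diagonal (singularValues A) * (E * Eᵀ)) = nuclearNorm A := by
    rw [hE, diagonal_mul_diagonal, trace_diagonal, nuclearNorm_eq_sum_singularValues]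
    exact Finset.sum_congr rfl fun j _ => by
      by_cases hj : singularValues A j = 0 <;> simp [hj]
  refine ⟨balancedLeftFactor A * E, balancedRightFactor A * E, ?_, ?_, ?_⟩
  · rw [transpose_mul, Matrix.mul_assoc, ← Matrix.mul_assoc E, hE, ← Matrix.mul_assoc,
      balancedLeftFactor_mul_diagonal_ite_mul_transpose]
  · rw [frobNorm_sq_mul, transpose_mul_balancedLeftFactor, hnorm]
  · rw [frobNorm_sq_mul, transpose_mul_balancedRightFactor, hnorm]

theorem nuclearNorm_mul_transpose_le (u : Matrix (Fin m) (Fin r) ℝ)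
    (v : Matrix (Fin n) (Fin r) ℝ) : nuclearNorm (u * vᵀ) ≤ frobNorm u * frobNorm v :=
  mInner_polarFactor_self (u * vᵀ) ▸
    mInner_mul_transpose_le (posSemidef_one_sub_transpose_mul_polarFactor _) u v

end NuclearNorm

theorem nuclearNorm_eq_half_min_factorization_general
    (m n r : ℕ) (δ : Matrix (Fin m) (Fin n) ℝ) (hrank : δ.rank ≤ r) :
    IsLeast {c : ℝ | ∃ (u : Matrix (Fin m) (Fin r) ℝ) (v : Matrix (Fin n) (Fin r) ℝ),
        u * vᵀ = δ ∧ c = frobNorm u ^ 2 + frobNorm v ^ 2}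
      (2 * nuclearNorm δ) := by
  obtain ⟨u, v, huv, hu, hv⟩ := exists_mul_transpose_eq_frobNorm_sq_eq_nuclearNorm δ hrank
  refine ⟨⟨u, v, huv, by rw [hu, hv]; ring⟩, ?_⟩
  rintro _ ⟨u, v, rfl, rfl⟩
  nlinarith [nuclearNorm_mul_transpose_le u v, sq_nonneg (frobNorm u - frobNorm v)]

/-- Lemma 5.1 of Recht–Fazel–Parrilo: for `δ` of rank at most `r`,
`‖δ‖_* = (1/2) min {‖u‖_F² + ‖v‖_F² : u ∈ ℝ^{m×r}, v ∈ ℝ^{n×r}, uvᵀ = δ}`,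
the minimum being attained.  Equivalently, `2‖δ‖_*` is the least element of the set of
values `‖u‖_F² + ‖v‖_F²` over factorizations `δ = uvᵀ`. -/
theorem nuclearNorm_eq_half_min_factorization
    (m n r : ℕ) (hr : 0 < r) (δ : Matrix (Fin m) (Fin n) ℝ) (hrank : δ.rank ≤ r) :
    IsLeast {c : ℝ | ∃ (u : Matrix (Fin m) (Fin r) ℝ) (v : Matrix (Fin n) (Fin r) ℝ),
        u * vᵀ = δ ∧ c = frobNorm u ^ 2 + frobNorm v ^ 2}
      (2 * nuclearNorm δ) :=
  nuclearNorm_eq_half_min_factorization_general m n r δ hrank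
end

section
/- Let X ∈ ℝ^{n×n} be symmetric positive semidefinite and let Z ∈ ℝ^{n×n} be a nonzero symmetric matrix whose range is contained in the range of X. Then there exists a nonzero real number t* such that X + t*Z is positive semidefinite and rank(X + t*Z) < rank(X). -/
/-!
Because `range Z ⊆ range X` (equivalently `ker X ⊆ ker Z`), the form `uᵀ Z u` is bounded by a
multiple of `uᵀ X u`: both vanish on `ker X`, and `uᵀ X u` is positive on the compact unit sphere
of `range X`. Hence `X + t Z ⪰ 0` for all small `t > 0`. After replacing `Z` by `-Z` if necessary,
`uᵀ Z u < 0` for some `u`, so the closed set `{t | X + t Z ⪰ 0}` is bounded above; let `t*` be its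
maximum. Always `range (X + t* Z) ⊆ range X`; were the ranks equal, the ranges would agree and
the same argument applied to `X + t* Z` would give `X + (t* + ε) Z ⪰ 0`.
-/

open Matrix LinearMap

namespace Matrix

variable {ι : Type*} [Fintype ι]

lemma IsSymm.dotProduct_mulVec_comm {R : Type*} [CommSemiring R] {M : Matrix ι ι R}
    (hM : M.IsSymm) (u v : ι → R) : u ⬝ᵥ M *ᵥ v = M *ᵥ u ⬝ᵥ v := by
  rw [dotProduct_mulVec, ← vecMul_transpose, hM.eq, dotProduct_comm]

lemma IsSymm.disjoint_range_ker {X : Matrix ι ι ℝ} (hX : X.IsSymm) :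
    Disjoint (range X.mulVecLin) (ker X.mulVecLin) := by
  rw [Submodule.disjoint_def]
  rintro _ ⟨w, rfl⟩ hv
  simp only [mem_ker, mulVecLin_apply] at hv ⊢
  rw [← dotProduct_self_eq_zero, ← hX.dotProduct_mulVec_comm, hv, dotProduct_zero]

lemma IsSymm.isCompl_range_ker {X : Matrix ι ι ℝ} (hX : X.IsSymm) :
    IsCompl (range X.mulVecLin) (ker X.mulVecLin) :=
  (Submodule.isCompl_iff_disjoint _ _ (finrank_range_add_finrank_ker _).ge).mpr
    hX.disjoint_range_ker

lemma IsSymm.ker_le_ker_of_range_le {X Z : Matrix ι ι ℝ} (hX : X.IsSymm) (hZ : Z.IsSymm)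
    (h : range Z.mulVecLin ≤ range X.mulVecLin) : ker X.mulVecLin ≤ ker Z.mulVecLin := by
  intro v hv
  obtain ⟨w, hw⟩ := h ⟨Z *ᵥ v, rfl⟩
  simp only [mem_ker, mulVecLin_apply] at hv hw ⊢
  rw [← dotProduct_self_eq_zero, ← hZ.dotProduct_mulVec_comm, ← hw,
    hX.dotProduct_mulVec_comm, hv, zero_dotProduct]

lemma IsSymm.dotProduct_mulVec_add_of_mulVec_eq_zero {R : Type*} [CommSemiring R]
    {M : Matrix ι ι R} (hM : M.IsSymm) (a : ι → R) {b : ι → R} (hb : M *ᵥ b = 0) :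
    (a + b) ⬝ᵥ M *ᵥ (a + b) = a ⬝ᵥ M *ᵥ a := by
  rw [mulVec_add, hb, add_zero, add_dotProduct, hM.dotProduct_mulVec_comm b, hb,
    zero_dotProduct, add_zero]

lemma smul_dotProduct_mulVec_smul {R : Type*} [CommSemiring R] (M : Matrix ι ι R) (r : R)
    (v : ι → R) : r • v ⬝ᵥ M *ᵥ (r • v) = r ^ 2 * (v ⬝ᵥ M *ᵥ v) := by
  rw [mulVec_smul, smul_dotProduct, dotProduct_smul, smul_eq_mul, smul_eq_mul]
  ring

lemma dotProduct_mulVec_add_smul {R : Type*} [CommSemiring R] (X Z : Matrix ι ι R) (t : R)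
    (v : ι → R) : v ⬝ᵥ (X + t • Z) *ᵥ v = v ⬝ᵥ X *ᵥ v + t * (v ⬝ᵥ Z *ᵥ v) := by
  rw [add_mulVec, smul_mulVec, dotProduct_add, dotProduct_smul, smul_eq_mul]

lemma PosSemidef.dotProduct_mulVec_pos_of_mem_range {X : Matrix ι ι ℝ} (hX : X.PosSemidef)
    {v : ι → ℝ} (hv : v ∈ range X.mulVecLin) (hv0 : v ≠ 0) : 0 < v ⬝ᵥ X *ᵥ v := by
  have hnonneg : 0 ≤ v ⬝ᵥ X *ᵥ v := by simpa using hX.dotProduct_mulVec_nonneg v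
  refine hnonneg.lt_of_ne' fun h => hv0 ?_
  have hker : v ∈ ker X.mulVecLin := by
    simpa using (hX.dotProduct_mulVec_zero_iff v).mp (by simpa using h)
  exact Submodule.disjoint_def.mp (isHermitian_iff_isSymm.mp hX.1).disjoint_range_ker v hv hker

lemma PosSemidef.exists_abs_dotProduct_mulVec_le {X Z : Matrix ι ι ℝ} (hX : X.PosSemidef)
    (hZ : Z.IsSymm) (h : range Z.mulVecLin ≤ range X.mulVecLin) :
    ∃ C, ∀ u, |u ⬝ᵥ Z *ᵥ u| ≤ C * (u ⬝ᵥ X *ᵥ u) := by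
  have hXs : X.IsSymm := isHermitian_iff_isSymm.mp hX.1
  set V := range X.mulVecLin
  set K := Metric.sphere 0 1 ∩ (V : Set (ι → ℝ))
  have hK : IsCompact K :=
    (isCompact_sphere 0 1).inter_right (Submodule.closed_of_finiteDimensional V)
  have hpos : ∀ k ∈ K, 0 < k ⬝ᵥ X *ᵥ k := fun k hk =>
    hX.dotProduct_mulVec_pos_of_mem_range hk.2 (ne_zero_of_mem_unit_sphere ⟨k, hk.1⟩)
  obtain ⟨C, hC⟩ := hK.exists_bound_of_continuousOn
    (f := fun k => |k ⬝ᵥ Z *ᵥ k| / (k ⬝ᵥ X *ᵥ k)) <|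
    ContinuousOn.div (by fun_prop) (by fun_prop) fun k hk => (hpos k hk).ne'
  have hV : ∀ a ∈ V, |a ⬝ᵥ Z *ᵥ a| ≤ C * (a ⬝ᵥ X *ᵥ a) := by
    intro a ha
    rcases eq_or_ne a 0 with rfl | ha0
    · simp
    obtain ⟨r, k, hk, rfl⟩ : ∃ r : ℝ, ∃ k ∈ K, a = r • k :=
      ⟨‖a‖, ‖a‖⁻¹ • a, ⟨by simp [norm_smul, ha0], V.smul_mem _ ha⟩, by simp [smul_smul, ha0]⟩
    have hCk := (le_abs_self _).trans (hC k hk)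
    rw [div_le_iff₀ (hpos k hk)] at hCk
    rw [smul_dotProduct_mulVec_smul, smul_dotProduct_mulVec_smul, abs_mul,
      abs_of_nonneg (sq_nonneg _)]
    exact (mul_le_mul_of_nonneg_left hCk (sq_nonneg r)).trans_eq (by ring)
  refine ⟨C, fun u => ?_⟩
  obtain ⟨a, ha, b, hb, rfl⟩ := Submodule.mem_sup.mp
    (hXs.isCompl_range_ker.sup_eq_top ▸ Submodule.mem_top : u ∈ V ⊔ ker X.mulVecLin)
  have hZb : Z *ᵥ b = 0 := hXs.ker_le_ker_of_range_le hZ h hb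
  rw [hZ.dotProduct_mulVec_add_of_mulVec_eq_zero a hZb,
    hXs.dotProduct_mulVec_add_of_mulVec_eq_zero a hb]
  exact hV a ha

lemma exists_dotProduct_mulVec_ne_zero {Z : Matrix ι ι ℝ} (hZ : Z.IsSymm) (hZ0 : Z ≠ 0) :
    ∃ v, v ⬝ᵥ Z *ᵥ v ≠ 0 := by
  classical
  by_contra! h
  have hZ' := isSymmetric_toEuclideanLin_iff.mpr (isHermitian_iff_isSymm.mpr hZ)
  have hT := hZ'.inner_map_self_eq_zero.mp fun x => by
    simpa [EuclideanSpace.inner_eq_star_dotProduct, dotProduct_comm] using h x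
  exact hZ0 (by simpa using hT)

lemma isClosed_setOf_posSemidef : IsClosed {A : Matrix ι ι ℝ | A.PosSemidef} := by
  have : {A : Matrix ι ι ℝ | A.PosSemidef} =
      {A | Aᴴ = A} ∩ ⋂ x : ι → ℝ, {A | 0 ≤ star x ⬝ᵥ A *ᵥ x} := by
    ext A
    simp [posSemidef_iff_dotProduct_mulVec, IsHermitian]
  rw [this]
  exact (isClosed_eq (by fun_prop) continuous_id).inter
    (isClosed_iInter fun x => isClosed_le continuous_const (by fun_prop))

lemma mulVecLin_smul {m n R : Type*} [Fintype n] [CommSemiring R] (M : Matrix m n R) (r : R) :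
    (r • M).mulVecLin = r • M.mulVecLin := by
  ext
  simp

lemma mulVecLin_neg {m n R : Type*} [Fintype n] [CommRing R] (M : Matrix m n R) :
    (-M).mulVecLin = -M.mulVecLin := by
  ext
  simp

lemma range_mulVecLin_add_smul_le {X Z : Matrix ι ι ℝ}
    (h : range Z.mulVecLin ≤ range X.mulVecLin) (t : ℝ) :
    range (X + t • Z).mulVecLin ≤ range X.mulVecLin := by
  rw [mulVecLin_add, mulVecLin_smul]
  exact (range_add_le _ _).trans (sup_le le_rfl ((range_smul_le_range _ t).trans h))

lemma PosSemidef.exists_pos_posSemidef_add_smul {X Z : Matrix ι ι ℝ} (hX : X.PosSemidef)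
    (hZ : Z.IsSymm) (h : range Z.mulVecLin ≤ range X.mulVecLin) :
    ∃ ε : ℝ, 0 < ε ∧ (X + ε • Z).PosSemidef := by
  obtain ⟨C, hC⟩ := hX.exists_abs_dotProduct_mulVec_le hZ h
  set ε := (1 + |C|)⁻¹
  have hε : 0 < ε := by positivity
  refine ⟨ε, hε, .of_dotProduct_mulVec_nonneg ?_ fun x => ?_⟩
  · exact hX.1.add (isHermitian_iff_isSymm.mpr (hZ.smul ε))
  have hXx : 0 ≤ x ⬝ᵥ X *ᵥ x := by simpa using hX.dotProduct_mulVec_nonneg x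
  have hεC : ε * |C| ≤ 1 := by
    rw [inv_mul_le_iff₀ (by positivity)]
    linarith
  have hZx : |x ⬝ᵥ Z *ᵥ x| ≤ |C| * (x ⬝ᵥ X *ᵥ x) :=
    (hC x).trans (mul_le_mul_of_nonneg_right (le_abs_self C) hXx)
  rw [star_trivial, dotProduct_mulVec_add_smul]
  nlinarith [mul_le_mul_of_nonneg_left (neg_abs_le (x ⬝ᵥ Z *ᵥ x)) hε.le,
    mul_le_mul_of_nonneg_left hZx hε.le, mul_le_mul_of_nonneg_right hεC hXx]

lemma PosSemidef.exists_rank_lt_of_dotProduct_mulVec_neg {X Z : Matrix ι ι ℝ}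
    (hX : X.PosSemidef) (hZ : Z.IsSymm) (h : range Z.mulVecLin ≤ range X.mulVecLin)
    {v : ι → ℝ} (hv : v ⬝ᵥ Z *ᵥ v < 0) :
    ∃ t : ℝ, 0 < t ∧ (X + t • Z).PosSemidef ∧ (X + t • Z).rank < X.rank := by
  set S := {t : ℝ | (X + t • Z).PosSemidef}
  have hS : IsClosed S := isClosed_setOf_posSemidef.preimage (by fun_prop)
  have hSbdd : BddAbove S := by
    refine ⟨(v ⬝ᵥ X *ᵥ v) / -(v ⬝ᵥ Z *ᵥ v), fun t ht => ?_⟩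
    have := ht.dotProduct_mulVec_nonneg v
    rw [star_trivial, dotProduct_mulVec_add_smul] at this
    rw [le_div_iff₀ (neg_pos.mpr hv)]
    linarith
  obtain ⟨ε, hε, hεS⟩ := hX.exists_pos_posSemidef_add_smul hZ h
  have htS : sSup S ∈ S := hS.csSup_mem ⟨ε, hεS⟩ hSbdd
  refine ⟨sSup S, hε.trans_le (le_csSup hSbdd hεS), htS, ?_⟩
  have hle := range_mulVecLin_add_smul_le h (sSup S)
  refine (Submodule.finrank_mono hle).lt_of_ne fun hrank => ?_
  have hrange : range Z.mulVecLin ≤ range (X + sSup S • Z).mulVecLin :=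
    (Submodule.eq_of_le_of_finrank_eq hle hrank).ge.trans' h
  obtain ⟨ε', hε', hε'S⟩ := htS.exists_pos_posSemidef_add_smul hZ hrange
  have : sSup S + ε' ∈ S := by simpa [S, add_smul, add_assoc] using hε'S
  linarith [le_csSup hSbdd this]

end Matrix

/-- Lemma A.2: if `X ⪰ 0` and `Z` is a nonzero symmetric matrix with
`range Z ⊆ range X`, then there is a nonzero `t*` with `X + t* Z ⪰ 0` and
`rank (X + t* Z) < rank X`. -/
theorem rank_reduction_along_symmetric_direction
    (n : ℕ) (X Z : Matrix (Fin n) (Fin n) ℝ)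
    (hX : X.PosSemidef) (hZsymm : Z.IsSymm) (hZne : Z ≠ 0)
    (hrange : LinearMap.range Z.mulVecLin ≤ LinearMap.range X.mulVecLin) :
    ∃ t : ℝ, t ≠ 0 ∧ (X + t • Z).PosSemidef ∧ (X + t • Z).rank < X.rank := by
  obtain ⟨v, hv⟩ := exists_dotProduct_mulVec_ne_zero hZsymm hZne
  rcases hv.lt_or_gt with hneg | hpos
  · obtain ⟨t, ht, hpsd, hrank⟩ := hX.exists_rank_lt_of_dotProduct_mulVec_neg hZsymm hrange hneg
    exact ⟨t, ht.ne', hpsd, hrank⟩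
  · have hneg : v ⬝ᵥ (-Z) *ᵥ v < 0 := by rwa [neg_mulVec, dotProduct_neg, neg_lt_zero]
    obtain ⟨t, ht, hpsd, hrank⟩ := hX.exists_rank_lt_of_dotProduct_mulVec_neg hZsymm.neg
      (by rwa [mulVecLin_neg, range_neg]) hneg
    exact ⟨-t, neg_ne_zero.mpr ht.ne', by simpa using hpsd, by simpa using hrank⟩
end

section
/- Fix λ ≥ 0, assume L̂_λ has a global minimizer over ℝ^{m×n} (not necessarily unique), let P ∈ S₊^{m+n} be a nonzero positive semidefinite matrix, and let r > 0. If Q̂ = [û; v̂] ∈ ℝ^{(m+n)×r} (with û ∈ ℝ^{m×r}, v̂ ∈ ℝ^{n×r}) is a second-order stationary point of L̂_{λ,P} and Q̂ is rank deficient (rank(Q̂) < r), then (û, v̂) is a global minimizer of L̂_{λ,P}. -/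
open MeasureTheory Matrix

/-- The linearized empirical risk
`L̂(δ) = (1/N) ∑ᵢ ℓᵢ(bᵢ + (⟨G i j, δ⟩)ⱼ)`. -/
noncomputable def Lhat {m n K N : ℕ} (G : Fin N → Fin K → Matrix (Fin m) (Fin n) ℝ)
    (b : Fin N → Fin K → ℝ) (ℓ : Fin N → (Fin K → ℝ) → ℝ)
    (δ : Matrix (Fin m) (Fin n) ℝ) : ℝ :=
  (1 / (N : ℝ)) * ∑ i, ℓ i fun j => b i j + mInner (G i j) δ

/-- `Q = [u; v]`: vertical stacking of `u : ℝ^{m×r}` on top of `v : ℝ^{n×r}`. -/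
def stack {m n r : ℕ} (u : Matrix (Fin m) (Fin r) ℝ) (v : Matrix (Fin n) (Fin r) ℝ) :
    Matrix (Fin (m + n)) (Fin r) ℝ :=
  fun i j => Fin.addCases (motive := fun _ => ℝ) (fun i' => u i' j) (fun i' => v i' j) i

attribute [local instance] Matrix.normedAddCommGroup Matrix.normedSpace

/-- A second-order stationary point: the gradient vanishes and the Hessian quadratic form is
nonnegative in every direction. -/
def IsSOSP {E : Type*} [NormedAddCommGroup E] [NormedSpace ℝ E] (f : E → ℝ) (x : E) : Prop :=
  fderiv ℝ f x = 0 ∧ ∀ v : E, 0 ≤ iteratedFDeriv ℝ 2 f x ![v, v]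

/-- The perturbed loss
`L̂_{λ,P}(u,v) = L̂(uvᵀ) + (λ/2)‖u‖_F² + (λ/2)‖v‖_F² + ⟨P, QQᵀ⟩` with `Q = [u; v]`. -/
noncomputable def LhatP {m n K N : ℕ} (r : ℕ) (G : Fin N → Fin K → Matrix (Fin m) (Fin n) ℝ)
    (b : Fin N → Fin K → ℝ) (ℓ : Fin N → (Fin K → ℝ) → ℝ) (lam : ℝ)
    (P : Matrix (Fin (m + n)) (Fin (m + n)) ℝ)
    (uv : Matrix (Fin m) (Fin r) ℝ × Matrix (Fin n) (Fin r) ℝ) : ℝ :=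
  Lhat G b ℓ (uv.1 * uv.2ᵀ) + lam / 2 * frobNorm uv.1 ^ 2 + lam / 2 * frobNorm uv.2 ^ 2
    + mInner P (stack uv.1 uv.2 * (stack uv.1 uv.2)ᵀ)

/-!
Write `Q = [u; v]` and `F X = L̂(X₁₂) + (λ/2) tr X + ⟨P, X⟩` for square `X`, so that
`L̂_{λ,P}(u, v) = F (Q Qᵀ)` with `F` convex and `C²`. If `Q z = 0` for some `z ≠ 0`, then along
`Q + t a zᵀ` the product `Q Qᵀ` moves only at second order, by `t² ‖z‖² a aᵀ`, so the
second-order condition gives `DF(QQᵀ)[a aᵀ] ≥ 0` for every `a`; along `(1 + t) Q` the first-order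
condition gives `DF(QQᵀ)[QQᵀ] = 0`. Since every `Q'Q'ᵀ` is a sum of matrices `a aᵀ`, convexity of
`F` yields `F(Q'Q'ᵀ) ≥ F(QQᵀ) + DF(QQᵀ)[Q'Q'ᵀ - QQᵀ] ≥ F(QQᵀ)`.
-/

section LineDerivatives

variable {E : Type*} [NormedAddCommGroup E] [NormedSpace ℝ E] {f : E → ℝ}

theorem iteratedFDeriv_two_apply_eq_deriv_deriv (hf : ContDiff ℝ 2 f) (x v : E) :
    iteratedFDeriv ℝ 2 f x ![v, v] = deriv (deriv fun t : ℝ => f (x + t • v)) 0 := by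
  have hshift : ContDiff ℝ 2 (fun y => f (x + y)) := hf.comp (contDiff_const.add contDiff_id)
  have hline : (fun t : ℝ => f (x + t • v)) =
      (fun y => f (x + y)) ∘ ContinuousLinearMap.smulRight (1 : ℝ →L[ℝ] ℝ) v := by
    funext t; simp
  rw [← iteratedDeriv_one (f := fun t : ℝ => f (x + t • v)), ← iteratedDeriv_succ,
    iteratedDeriv_eq_iteratedFDeriv, hline,
    ContinuousLinearMap.iteratedFDeriv_comp_right _ hshift _ le_rfl, iteratedFDeriv_comp_add_left]
  simp only [ContinuousLinearMap.smulRight_apply, one_apply_eq_self, zero_smul,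
    add_zero, ContinuousMultilinearMap.compContinuousLinearMap_apply, one_smul]
  congr 1
  ext i; fin_cases i <;> simp

theorem ConvexOn.add_fderiv_sub_le (hf : ConvexOn ℝ Set.univ f) {x : E}
    (hx : DifferentiableAt ℝ f x) (y : E) : f x + fderiv ℝ f x (y - x) ≤ f y := by
  set γ : ℝ →ᵃ[ℝ] E := AffineMap.lineMap x y
  have hconv : ConvexOn ℝ Set.univ (f ∘ γ) := by simpa using hf.comp_affineMap γ
  have hderiv : HasDerivAt (f ∘ γ) (fderiv ℝ f x (y - x)) 0 := by
    have hx' : HasFDerivAt f (fderiv ℝ f x) (γ 0) := by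
      rw [AffineMap.lineMap_apply_zero]; exact hx.hasFDerivAt
    exact hx'.comp_hasDerivAt 0 AffineMap.hasDerivAt_lineMap
  have := hconv.le_slope_of_hasDerivAt (Set.mem_univ 0) (Set.mem_univ 1) zero_lt_one hderiv
  simp only [slope_def_field, Function.comp_apply, γ, AffineMap.lineMap_apply_zero,
    AffineMap.lineMap_apply_one, sub_zero, div_one] at this
  linarith

theorem hasDerivAt_comp_add_smul {x v : E} {s : ℝ → ℝ} {s' t : ℝ}
    (hf : DifferentiableAt ℝ f (x + s t • v)) (hs : HasDerivAt s s' t) :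
    HasDerivAt (fun τ => f (x + s τ • v)) (s' * fderiv ℝ f (x + s t • v) v) t := by
  have := hf.hasFDerivAt.comp_hasDerivAt t ((hs.smul_const v).const_add x)
  simpa only [Function.comp_def, map_smul, smul_eq_mul] using this

theorem deriv_deriv_comp_add_sq_smul (hf : ContDiff ℝ 2 f) (x v : E) :
    deriv (deriv fun t : ℝ => f (x + t ^ 2 • v)) 0 = 2 * fderiv ℝ f x v := by
  have hd : Differentiable ℝ f := hf.differentiable (by norm_num)
  have hfirst : deriv (fun t : ℝ => f (x + t ^ 2 • v)) =
      fun t => 2 * t * fderiv ℝ f (x + t ^ 2 • v) v := by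
    funext t
    simpa using (hasDerivAt_comp_add_smul (hd _) (hasDerivAt_pow 2 t)).deriv
  have hk : DifferentiableAt ℝ (fun t : ℝ => fderiv ℝ f (x + t ^ 2 • v) v) 0 := by
    have := (hf.fderiv_right (m := 1) (by norm_num)).differentiable one_ne_zero
    fun_prop
  rw [hfirst]
  simpa using (((hasDerivAt_id (0 : ℝ)).const_mul 2).fun_mul hk.hasDerivAt).deriv

end LineDerivatives

theorem IsSOSP.of_comp_continuousLinearEquiv {E F : Type*} [NormedAddCommGroup E]
    [NormedSpace ℝ E] [NormedAddCommGroup F] [NormedSpace ℝ F] {f : F → ℝ} (hf : ContDiff ℝ 2 f)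
    (e : E ≃L[ℝ] F) {x : E} (h : IsSOSP (f ∘ e) x) : IsSOSP f (e x) := by
  obtain ⟨hgrad, hhess⟩ := h
  refine ⟨?_, fun v => ?_⟩
  · rw [e.comp_right_fderiv] at hgrad
    ext v
    simpa using congrArg (fun φ : E →L[ℝ] ℝ => φ (e.symm v)) hgrad
  · have hcomp := (e : E →L[ℝ] F).iteratedFDeriv_comp_right hf x (i := 2) le_rfl
    rw [ContinuousLinearEquiv.coe_coe] at hcomp
    have h := hhess (e.symm v)
    rw [hcomp] at h
    convert h using 1
    simp only [ContinuousMultilinearMap.compContinuousLinearMap_apply]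
    congr 1
    ext i; fin_cases i <;> simp

namespace Matrix

variable {d r R : Type*} [Fintype r]

theorem contDiff_mul_transpose {𝕜 : Type*} [NontriviallyNormedField 𝕜] [Fintype d]
    {n : WithTop ℕ∞} : ContDiff 𝕜 n (fun Q : Matrix d r 𝕜 => Q * Qᵀ) :=
  contDiff_pi.2 fun i => contDiff_pi.2 fun j => by
    simp only [mul_apply, transpose_apply]
    exact ContDiff.sum fun k _ => (contDiff_apply_apply 𝕜 𝕜 i k).mul (contDiff_apply_apply 𝕜 𝕜 j k)

theorem mul_transpose_eq_sum_vecMulVec [NonUnitalNonAssocSemiring R] (Q : Matrix d r R) :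
    Q * Qᵀ = ∑ k, vecMulVec (Qᵀ k) (Qᵀ k) := by
  ext i j
  simp [mul_apply, vecMulVec_apply, sum_apply]

theorem exists_mulVec_eq_zero_of_rank_lt {K m n : Type*} [Field K] [Fintype n]
    {A : Matrix m n K} (h : A.rank < Fintype.card n) : ∃ z ≠ 0, A *ᵥ z = 0 := by
  by_contra! hinj
  have : Function.Injective A.mulVecLin := by
    rw [← LinearMap.ker_eq_bot, LinearMap.ker_eq_bot']
    exact fun z hz => by_contra fun hz0 => hinj z hz0 hz
  have := LinearMap.finrank_range_of_inj this
  rw [Module.finrank_fintype_fun_eq_card] at this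
  exact h.ne this

variable [CommRing R]

theorem add_smul_mul_transpose_add_smul {Q δ : Matrix d r R} (h : Q * δᵀ = 0) (t : R) :
    (Q + t • δ) * (Q + t • δ)ᵀ = Q * Qᵀ + t ^ 2 • (δ * δᵀ) := by
  have h' : δ * Qᵀ = 0 := by simpa using congrArg transpose h
  simp only [transpose_add, transpose_smul, Matrix.add_mul, Matrix.mul_add, Matrix.smul_mul,
    Matrix.mul_smul, h, h', smul_zero]
  module

theorem add_smul_self_mul_transpose (Q : Matrix d r R) (t : R) :
    (Q + t • Q) * (Q + t • Q)ᵀ = Q * Qᵀ + (2 * t + t ^ 2) • (Q * Qᵀ) := by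
  simp only [transpose_add, transpose_smul, Matrix.add_mul, Matrix.mul_add, Matrix.smul_mul,
    Matrix.mul_smul]
  module

end Matrix

section BurerMonteiro

variable {d r : Type*} [Fintype d] [Fintype r] {f : Matrix d d ℝ → ℝ} {Q : Matrix d r ℝ}

theorem fderiv_apply_mul_transpose_self_eq_zero (hf : DifferentiableAt ℝ f (Q * Qᵀ))
    (hQ : fderiv ℝ (fun Q : Matrix d r ℝ => f (Q * Qᵀ)) Q = 0) :
    fderiv ℝ f (Q * Qᵀ) (Q * Qᵀ) = 0 := by
  have hg : DifferentiableAt ℝ (fun Q : Matrix d r ℝ => f (Q * Qᵀ)) (Q + (0 : ℝ) • Q) := by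
    rw [zero_smul, add_zero]
    exact hf.comp Q (contDiff_mul_transpose.differentiable one_ne_zero Q)
  have hs : HasDerivAt (fun t : ℝ => 2 * t + t ^ 2) 2 0 := by
    simpa using ((hasDerivAt_id' (0 : ℝ)).const_mul 2).fun_add (hasDerivAt_pow 2 (0 : ℝ))
  have hradial : HasDerivAt (fun t : ℝ => f (Q * Qᵀ + (2 * t + t ^ 2) • (Q * Qᵀ)))
      (fderiv ℝ (fun Q : Matrix d r ℝ => f (Q * Qᵀ)) Q Q) 0 := by
    have h := hasDerivAt_comp_add_smul hg (hasDerivAt_id' (0 : ℝ))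
    simp only [add_smul_self_mul_transpose, zero_smul, add_zero, one_mul] at h
    exact h
  have hlifted : HasDerivAt (fun t : ℝ => f (Q * Qᵀ + (2 * t + t ^ 2) • (Q * Qᵀ)))
      (2 * fderiv ℝ f (Q * Qᵀ) (Q * Qᵀ)) 0 := by
    have h := hasDerivAt_comp_add_smul (x := Q * Qᵀ) (v := Q * Qᵀ) (t := 0)
      (s := fun t : ℝ => 2 * t + t ^ 2) (by norm_num; exact hf) hs
    norm_num at h
    exact h
  have := hradial.unique hlifted
  rw [hQ] at this
  simpa using this

theorem fderiv_apply_vecMulVec_self_nonneg (hf : ContDiff ℝ 2 f)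
    (hQ : ∀ δ, 0 ≤ iteratedFDeriv ℝ 2 (fun Q : Matrix d r ℝ => f (Q * Qᵀ)) Q ![δ, δ])
    {z : r → ℝ} (hz : z ≠ 0) (hQz : Q *ᵥ z = 0) (a : d → ℝ) :
    0 ≤ fderiv ℝ f (Q * Qᵀ) (vecMulVec a a) := by
  set δ := vecMulVec a z
  have hQδ : Q * δᵀ = 0 := by simp [δ, transpose_vecMulVec, mul_vecMulVec, hQz]
  have hδδ : δ * δᵀ = (z ⬝ᵥ z) • vecMulVec a a := by
    simp [δ, transpose_vecMulVec, vecMulVec_mul_vecMulVec]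
  have hz2 : 0 < z ⬝ᵥ z := by simpa using dotProduct_self_star_pos_iff.2 hz
  have hhess : 0 ≤ 2 * fderiv ℝ f (Q * Qᵀ) (δ * δᵀ) := by
    have h := hQ δ
    rw [iteratedFDeriv_two_apply_eq_deriv_deriv (f := fun Q : Matrix d r ℝ => f (Q * Qᵀ))
      (hf.comp contDiff_mul_transpose)] at h
    simp only [add_smul_mul_transpose_add_smul hQδ] at h
    rwa [deriv_deriv_comp_add_sq_smul hf] at h
  rw [hδδ, map_smul, smul_eq_mul] at hhess
  nlinarith

theorem ConvexOn.le_of_isSOSP_comp_mul_transpose (hconv : ConvexOn ℝ Set.univ f)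
    (hf : ContDiff ℝ 2 f) (hQ : IsSOSP (fun Q : Matrix d r ℝ => f (Q * Qᵀ)) Q)
    {z : r → ℝ} (hz : z ≠ 0) (hQz : Q *ᵥ z = 0) (Q' : Matrix d r ℝ) :
    f (Q * Qᵀ) ≤ f (Q' * Q'ᵀ) := by
  have hfirst := fderiv_apply_mul_transpose_self_eq_zero (hf.differentiable two_ne_zero _) hQ.1
  have hsecond : 0 ≤ fderiv ℝ f (Q * Qᵀ) (Q' * Q'ᵀ) := by
    rw [mul_transpose_eq_sum_vecMulVec Q', map_sum]
    exact Finset.sum_nonneg fun k _ => fderiv_apply_vecMulVec_self_nonneg hf hQ.2 hz hQz _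
  -- The ascription replaces the generic normed-space instances on `Matrix d d ℝ` by the
  -- `Matrix` ones, so that `linarith` sees the same atoms as in `hfirst` and `hsecond`.
  have hgrad : f (Q * Qᵀ) + fderiv ℝ f (Q * Qᵀ) (Q' * Q'ᵀ - Q * Qᵀ) ≤ f (Q' * Q'ᵀ) :=
    hconv.add_fderiv_sub_le (hf.differentiable two_ne_zero _) _
  rw [map_sub] at hgrad
  linarith

end BurerMonteiro

section Stack

variable {m n r : ℕ}

@[simp] theorem stack_castAdd (u : Matrix (Fin m) (Fin r) ℝ) (v : Matrix (Fin n) (Fin r) ℝ)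
    (i : Fin m) (k : Fin r) : stack u v (Fin.castAdd n i) k = u i k := by
  simp [stack]

@[simp] theorem stack_natAdd (u : Matrix (Fin m) (Fin r) ℝ) (v : Matrix (Fin n) (Fin r) ℝ)
    (j : Fin n) (k : Fin r) : stack u v (Fin.natAdd m j) k = v j k := by
  simp [stack]

variable (m n r) in
noncomputable def stackEquiv :
    (Matrix (Fin m) (Fin r) ℝ × Matrix (Fin n) (Fin r) ℝ) ≃L[ℝ] Matrix (Fin (m + n)) (Fin r) ℝ :=
  LinearEquiv.toContinuousLinearEquiv
    { toFun := fun uv => stack uv.1 uv.2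
      invFun := fun Q => (Q.submatrix (Fin.castAdd n) id, Q.submatrix (Fin.natAdd m) id)
      map_add' := fun _ _ => by ext i k; refine Fin.addCases (fun i => ?_) (fun i => ?_) i <;> simp
      map_smul' := fun _ _ => by
        ext i k; refine Fin.addCases (fun i => ?_) (fun i => ?_) i <;> simp
      left_inv := fun _ => by ext <;> simp
      right_inv := fun _ => by ext i k; refine Fin.addCases (fun i => ?_) (fun i => ?_) i <;> simp }

theorem stackEquiv_apply (uv : Matrix (Fin m) (Fin r) ℝ × Matrix (Fin n) (Fin r) ℝ) :
    stackEquiv m n r uv = stack uv.1 uv.2 := rfl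

theorem stack_mul_transpose_submatrix (u : Matrix (Fin m) (Fin r) ℝ)
    (v : Matrix (Fin n) (Fin r) ℝ) :
    (stack u v * (stack u v)ᵀ).submatrix (Fin.castAdd n) (Fin.natAdd m) = u * vᵀ := by
  ext i j; simp [mul_apply]

theorem frobNorm_sq_eq_trace {a c : ℕ} (A : Matrix (Fin a) (Fin c) ℝ) :
    frobNorm A ^ 2 = (A * Aᵀ).trace := by
  rw [frobNorm, Real.sq_sqrt (by positivity)]
  simp [trace, mul_apply, sq]

theorem trace_stack_mul_transpose (u : Matrix (Fin m) (Fin r) ℝ) (v : Matrix (Fin n) (Fin r) ℝ) :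
    (stack u v * (stack u v)ᵀ).trace = frobNorm u ^ 2 + frobNorm v ^ 2 := by
  simp [frobNorm_sq_eq_trace, trace, mul_apply, Fin.sum_univ_add]

end Stack

section LiftedLoss

variable {m n K N : ℕ} (G : Fin N → Fin K → Matrix (Fin m) (Fin n) ℝ) (b : Fin N → Fin K → ℝ)
  (ℓ : Fin N → (Fin K → ℝ) → ℝ)

noncomputable def mInnerLinearMap {k l : ℕ} (A : Matrix (Fin k) (Fin l) ℝ) :
    Matrix (Fin k) (Fin l) ℝ →ₗ[ℝ] ℝ :=
  traceLinearMap (Fin l) ℝ ℝ ∘ₗ mulLeftLinearMap (Fin l) ℝ Aᵀ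

theorem convexOn_Lhat (hconv : ∀ i, ConvexOn ℝ Set.univ (ℓ i)) :
    ConvexOn ℝ Set.univ (Lhat G b ℓ) := by
  have hterm (i : Fin N) : ConvexOn ℝ Set.univ fun δ => ℓ i fun j => b i j + mInner (G i j) δ := by
    have h := ((hconv i).translate_right (b i)).comp_linearMap
      (LinearMap.pi fun j => mInnerLinearMap (G i j))
    rw [Set.preimage_univ, Set.preimage_univ] at h
    exact h
  have hsum : ConvexOn ℝ Set.univ fun δ => ∑ i, ℓ i fun j => b i j + mInner (G i j) δ := by
    rw [← Finset.sum_fn]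
    exact Finset.sum_induction _ (ConvexOn ℝ Set.univ) (fun _ _ => ConvexOn.add)
      (convexOn_const 0 convex_univ) fun i _ => hterm i
  exact hsum.smul (by positivity : (0 : ℝ) ≤ 1 / N)

theorem contDiff_Lhat (hsmooth : ∀ i, ContDiff ℝ 2 (ℓ i)) : ContDiff ℝ 2 (Lhat G b ℓ) := by
  unfold Lhat mInner trace diag
  simp only [mul_apply]
  fun_prop

variable (lam : ℝ) (P : Matrix (Fin (m + n)) (Fin (m + n)) ℝ)

noncomputable def liftedLoss (X : Matrix (Fin (m + n)) (Fin (m + n)) ℝ) : ℝ :=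
  Lhat G b ℓ (X.submatrix (Fin.castAdd n) (Fin.natAdd m)) + lam / 2 * X.trace + mInner P X

theorem convexOn_liftedLoss (hconv : ∀ i, ConvexOn ℝ Set.univ (ℓ i)) :
    ConvexOn ℝ Set.univ (liftedLoss G b ℓ lam P) := by
  have hblock := (convexOn_Lhat G b ℓ hconv).comp_linearMap
    { toFun := fun X : Matrix (Fin (m + n)) (Fin (m + n)) ℝ =>
        X.submatrix (Fin.castAdd n) (Fin.natAdd m)
      map_add' := fun _ _ => rfl
      map_smul' := fun _ _ => rfl }
  rw [Set.preimage_univ] at hblock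
  exact (hblock.add (((lam / 2) • traceLinearMap _ ℝ ℝ).convexOn convex_univ)).add
    ((mInnerLinearMap P).convexOn convex_univ)

theorem contDiff_liftedLoss (hsmooth : ∀ i, ContDiff ℝ 2 (ℓ i)) :
    ContDiff ℝ 2 (liftedLoss G b ℓ lam P) := by
  have hblock : ContDiff ℝ 2 fun X : Matrix (Fin (m + n)) (Fin (m + n)) ℝ =>
      X.submatrix (Fin.castAdd n) (Fin.natAdd m) :=
    contDiff_pi.2 fun i => contDiff_pi.2 fun j => contDiff_apply_apply ℝ ℝ _ _
  unfold liftedLoss mInner trace diag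
  simp only [mul_apply]
  have := (contDiff_Lhat G b ℓ hsmooth).comp hblock
  fun_prop

theorem LhatP_eq_liftedLoss_comp (r : ℕ) :
    LhatP r G b ℓ lam P = (fun Q => liftedLoss G b ℓ lam P (Q * Qᵀ)) ∘ stackEquiv m n r := by
  ext uv
  simp only [Function.comp_apply, stackEquiv_apply, LhatP, liftedLoss,
    stack_mul_transpose_submatrix, trace_stack_mul_transpose]
  ring

end LiftedLoss

theorem rank_deficient_SOSP_is_global_min_general
    (m n K N r : ℕ)
    (G : Fin N → Fin K → Matrix (Fin m) (Fin n) ℝ)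
    (b : Fin N → Fin K → ℝ) (ℓ : Fin N → (Fin K → ℝ) → ℝ)
    (hconv : ∀ i, ConvexOn ℝ Set.univ (ℓ i))
    (hsmooth : ∀ i, ContDiff ℝ 2 (ℓ i))
    (lam : ℝ)
    (P : Matrix (Fin (m + n)) (Fin (m + n)) ℝ)
    (uhat : Matrix (Fin m) (Fin r) ℝ) (vhat : Matrix (Fin n) (Fin r) ℝ)
    (hSOSP : IsSOSP (LhatP r G b ℓ lam P) (uhat, vhat))
    (hdeficient : (stack uhat vhat).rank < r) :
    ∀ uv : Matrix (Fin m) (Fin r) ℝ × Matrix (Fin n) (Fin r) ℝ,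
      LhatP r G b ℓ lam P (uhat, vhat) ≤ LhatP r G b ℓ lam P uv := by
  intro uv
  have hf := contDiff_liftedLoss G b ℓ lam P hsmooth
  rw [LhatP_eq_liftedLoss_comp] at hSOSP ⊢
  have hQ := hSOSP.of_comp_continuousLinearEquiv (hf.comp contDiff_mul_transpose)
  obtain ⟨z, hz, hQz⟩ :=
    exists_mulVec_eq_zero_of_rank_lt (A := stack uhat vhat) (by simpa using hdeficient)
  exact (convexOn_liftedLoss G b ℓ lam P hconv).le_of_isSOSP_comp_mul_transpose hf hQ hz hQz _

/-- Lemma 4.3: if `L̂_λ` has a global minimizer, `P ⪰ 0` is nonzero, and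
`Q̂ = [û; v̂]` is a rank-deficient second-order stationary point of `L̂_{λ,P}`, then
`(û, v̂)` is a global minimizer of `L̂_{λ,P}`. -/
theorem rank_deficient_SOSP_is_global_min
    (m n K N r : ℕ) (hm : 0 < m) (hn : 0 < n) (hK : 0 < K) (hN : 0 < N) (hr : 0 < r)
    (G : Fin N → Fin K → Matrix (Fin m) (Fin n) ℝ)
    (b : Fin N → Fin K → ℝ) (ℓ : Fin N → (Fin K → ℝ) → ℝ)
    (hconv : ∀ i, ConvexOn ℝ Set.univ (ℓ i))
    (hnonneg : ∀ i x, 0 ≤ ℓ i x)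
    (hsmooth : ∀ i, ContDiff ℝ 2 (ℓ i))
    (lam : ℝ) (hlam : 0 ≤ lam)
    (hmin : ∃ δ : Matrix (Fin m) (Fin n) ℝ, ∀ δ' : Matrix (Fin m) (Fin n) ℝ,
      Lhat G b ℓ δ + lam * nuclearNorm δ ≤ Lhat G b ℓ δ' + lam * nuclearNorm δ')
    (P : Matrix (Fin (m + n)) (Fin (m + n)) ℝ) (hP : P.PosSemidef) (hPne : P ≠ 0)
    (uhat : Matrix (Fin m) (Fin r) ℝ) (vhat : Matrix (Fin n) (Fin r) ℝ)
    (hSOSP : IsSOSP (LhatP r G b ℓ lam P) (uhat, vhat))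
    (hdeficient : (stack uhat vhat).rank < r) :
    ∀ uv : Matrix (Fin m) (Fin r) ℝ × Matrix (Fin n) (Fin r) ℝ,
      LhatP r G b ℓ lam P (uhat, vhat) ≤ LhatP r G b ℓ lam P uv :=
  rank_deficient_SOSP_is_global_min_general m n K N r G b ℓ hconv hsmooth lam P uhat vhat hSOSP
    hdeficient
end
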